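/- arXiv:1206.1396 — 5 statements merged into one kernel-verified Lean document; each statement's English description precedes it below -/
import Mathlib

section
/- (Discrete Ásgeirsson mean value theorem.) Let U : T_q × T_q → ℂ satisfy (L applied in the first variable) U(x,y) = (L applied in the second variable) U(x,y) for all vertices x, y ∈ T_q. Then for all x, y ∈ T_q and all m, n ∈ ℕ: Σ_{x' ∈ S(x,m)} Σ_{y' ∈ S(y,n)} U(x',y') = Σ_{x' ∈ S(x,n)} Σ_{y' ∈ S(y,m)} U(x',y'). -/
open scoped BigOperators

/-- A homogeneous tree of degree `q + 1`: a connected acyclic simple graph in which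
every vertex has exactly `q + 1` neighbours. Spheres for the graph distance are finite. -/
structure HomTree (q : ℕ) where
  V : Type
  G : SimpleGraph V
  conn : G.Connected
  acyclic : G.IsAcyclic
  sphereFin : ∀ (x : V) (n : ℕ), {y : V | G.dist x y = n}.Finite
  nbrFin : ∀ x : V, {y : V | G.Adj x y}.Finite
  degree : ∀ x : V, (nbrFin x).toFinset.card = q + 1

namespace HomTree

variable {q : ℕ}

/-- The sphere `S(x,n)` as a finite set. -/
noncomputable def sphere (T : HomTree q) (x : T.V) (n : ℕ) : Finset T.V :=
  (T.sphereFin x n).toFinset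

/-- The volume `δ(n)` of spheres. -/
def delta (q n : ℕ) : ℕ := if n = 0 then 1 else (q + 1) * q ^ (n - 1)

/-- The combinatorial Laplacian on the tree. -/
noncomputable def lap (T : HomTree q) (f : T.V → ℂ) (x : T.V) : ℂ :=
  f x - (1 / ((q : ℂ) + 1)) * ∑ y ∈ T.sphere x 1, f y

/-- Spherical means. -/
noncomputable def sphMean (T : HomTree q) (f : T.V → ℂ) (x : T.V) (n : ℕ) : ℂ :=
  (1 / (delta q n : ℂ)) * ∑ y ∈ T.sphere x n, f y

/-- Real powers of `q`, as a complex number. -/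
noncomputable def qpow (q : ℕ) (x : ℝ) : ℂ := (((q : ℝ) ^ x : ℝ) : ℂ)

/-- `γ = 2 / (q^{1/2} + q^{-1/2})`. -/
noncomputable def gam (q : ℕ) : ℝ := 2 / ((q : ℝ) ^ ((1 : ℝ)/2) + (q : ℝ) ^ (-(1 : ℝ)/2))

/-- The combinatorial Laplacian on `ℤ`. -/
noncomputable def lapZ (φ : ℤ → ℂ) (m : ℤ) : ℂ := φ m - (φ (m + 1) + φ (m - 1)) / 2

lemma ball_finite (T : HomTree q) (x : T.V) (n : ℕ) :
    {y : T.V | T.G.dist x y ≤ n}.Finite := by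
  have h : {y : T.V | T.G.dist x y ≤ n} ⊆ ⋃ m ∈ Set.Iic n, {y : T.V | T.G.dist x y = m} := by
    intro y hy
    exact Set.mem_biUnion hy rfl
  exact (((Set.finite_Iic n)).biUnion fun m _ => T.sphereFin x m).subset h

/-- The ball `B(x,n)` as a finite set. -/
noncomputable def ball (T : HomTree q) (x : T.V) (n : ℕ) : Finset T.V :=
  (T.ball_finite x n).toFinset

/-- The operator `M_n` (with `M_n = 0` for `n < 0`). -/
noncomputable def Mop (T : HomTree q) (n : ℤ) (f : T.V → ℂ) (x : T.V) : ℂ :=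
  if 0 ≤ n then
    qpow q (-(n : ℝ) / 2) *
      ∑ y ∈ (T.ball x n.toNat).filter (fun y => (n.toNat - T.G.dist x y) % 2 = 0), f y
  else 0

/-- The operator `C_n = (M_{|n|} - M_{|n|-2})/2`, `C_0 = Id`. -/
noncomputable def Cop (T : HomTree q) (n : ℤ) (f : T.V → ℂ) (x : T.V) : ℂ :=
  if n = 0 then f x else (Mop T |n| f x - Mop T (|n| - 2) f x) / 2

/-- The operator `S_n = sign(n) · M_{|n|-1}`. -/
noncomputable def Sop (T : HomTree q) (n : ℤ) (g : T.V → ℂ) (x : T.V) : ℂ :=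
  (n.sign : ℂ) * Mop T (|n| - 1) g x

/-- `u` solves the shifted wave equation on the tree. -/
def IsWaveSol (T : HomTree q) (u : T.V → ℤ → ℂ) : Prop :=
  ∀ (x : T.V) (n : ℤ),
    u x (n + 1) + u x (n - 1) = qpow q (-(1 : ℝ)/2) * ∑ y ∈ T.sphere x 1, u y n

/-- `u` solves the Cauchy problem for the shifted wave equation with data `f`, `g`. -/
def IsCauchy (T : HomTree q) (f g : T.V → ℂ) (u : T.V → ℤ → ℂ) : Prop :=
  IsWaveSol T u ∧ (∀ x, u x 0 = f x) ∧ ∀ x, (u x 1 - u x (-1)) / 2 = g x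

/-- Kinetic energy. -/
noncomputable def kinetic (T : HomTree q) (u : T.V → ℤ → ℂ) (n : ℤ) : ℝ :=
  (1/2) * ∑' x : T.V, ‖(u x (n + 1) - u x (n - 1)) / 2‖ ^ 2

/-- Potential energy. -/
noncomputable def potential (T : HomTree q) (u : T.V → ℤ → ℂ) (n : ℤ) : ℝ :=
  (1 / (4 * (q : ℝ))) * ∑' p : T.V × T.V,
      (if T.G.dist p.1 p.2 = 2 then ‖(u p.1 n - u p.2 n) / 2‖ ^ 2 else 0)
    - (((q : ℝ) - 1) ^ 2 / (8 * (q : ℝ))) * ∑' x : T.V, ‖u x n‖ ^ 2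

/-- The two-step Laplacian. -/
noncomputable def lap2 (T : HomTree q) (f : T.V → ℂ) (x : T.V) : ℂ :=
  f x - (1 / ((q : ℂ) * ((q : ℂ) + 1))) * ∑ y ∈ T.sphere x 2, f y

end HomTree

/-!
Summing over `S(x, m)` the sums over the unit spheres around its points gives a three-term
recurrence: the result is the sum over `S(x, m + 1)` plus `c_m` times the sum over `S(x, m - 1)`,
since in the tree a vertex at distance `m + 1` from `x` has exactly one neighbour at distance `m`
and a vertex at distance `m - 1` has `c_m ∈ {q, q + 1}` of them. The hypothesis on `U` says that
the unit-sphere sums of `U` in either variable agree, so `F m n = ∑_{S(x,m)} ∑_{S(y,n)} U`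
satisfies the same recurrence in `m` and in `n`, and this alone forces `F m n = F n m`.
-/

open Finset

theorem SimpleGraph.IsTree.existsUnique_adj_dist_eq {V : Type*} {G : SimpleGraph V}
    (hG : G.IsTree) {x u : V} {m : ℕ} (h : G.dist x u = m + 1) :
    ∃! v, G.Adj u v ∧ G.dist x v = m := by
  classical
  obtain ⟨P, hP, hlen⟩ := hG.connected.exists_path_of_dist x u
  have hP_nil : ¬P.Nil := by
    rw [← SimpleGraph.Walk.length_eq_zero_iff]; omega
  refine ⟨P.penultimate, ⟨(P.adj_penultimate hP_nil).symm, ?_⟩, ?_⟩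
  · have hle := G.dist_le P.dropLast
    have hstep := hG.dist_eq_dist_add_one_of_adj x (P.adj_penultimate hP_nil)
    rw [SimpleGraph.Walk.length_dropLast] at hle
    omega
  · rintro v ⟨hadj, hv⟩
    obtain ⟨r, hr, hrlen⟩ := hG.connected.exists_path_of_dist x v
    have hu : u ∉ r.support := fun hu => by
      have := (G.dist_le (r.takeUntil u hu)).trans (r.length_takeUntil_le_length hu)
      omega
    exact hG.isAcyclic.eq_penultimate_of_adj_end hP hadj
      (hG.isAcyclic.mem_support_of_ne_mem_support_of_adj_of_isPath hP hr hadj hu)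

theorem eq_swap_succ_of_rec {M : Type*} [AddCommGroup M] (c : ℕ → ℕ) (F : ℕ → ℕ → M)
    (hrel : ∀ a b, F (a + 1) b + c a • F (a - 1) b = F a (b + 1) + c b • F a (b - 1))
    {a n : ℕ} (hna : n ≤ a)
    (ih : ∀ i j, 3 * max i j + min i j < 3 * (a + 1) + n → F i j = F j i) :
    F (a + 1) n = F n (a + 1) := by
  rcases hna.eq_or_lt with rfl | hna
  · linear_combination (norm := module) hrel n n + c n • ih n (n - 1) (by omega)
  · linear_combination (norm := module) hrel a n + hrel n a + ih a (n + 1) (by omega) +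
      c n • ih a (n - 1) (by omega) - c a • ih (a - 1) n (by omega)

theorem eq_swap_of_rec {M : Type*} [AddCommGroup M] (c : ℕ → ℕ) (F : ℕ → ℕ → M)
    (hrel : ∀ a b, F (a + 1) b + c a • F (a - 1) b = F a (b + 1) + c b • F a (b - 1))
    (m n : ℕ) : F m n = F n m := by
  have ih : ∀ i j, 3 * max i j + min i j < 3 * max m n + min m n → F i j = F j i :=
    fun i j _ => eq_swap_of_rec c F hrel i j
  rcases lt_trichotomy n m with h | rfl | h
  · obtain ⟨a, rfl⟩ : ∃ a, m = a + 1 := ⟨m - 1, by omega⟩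
    exact eq_swap_succ_of_rec c F hrel (by omega) fun i j hij => ih i j (by omega)
  · rfl
  · obtain ⟨a, rfl⟩ : ∃ a, n = a + 1 := ⟨n - 1, by omega⟩
    exact (eq_swap_succ_of_rec c F hrel (by omega) fun i j hij => ih i j (by omega)).symm
termination_by 3 * max m n + min m n

namespace HomTree

/-- The number of neighbours at distance `m` from `x` of a vertex at distance `m - 1` from `x`;
the value `0` at `m = 0` neutralises the truncated `m - 1`. -/
def sphereCoeff (q : ℕ) : ℕ → ℕ
  | 0 => 0
  | 1 => q + 1
  | _ + 2 => q

variable {q : ℕ} (T : HomTree q)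

theorem isTree : T.G.IsTree := ⟨T.conn, T.acyclic⟩

@[simp]
theorem mem_sphere {x y : T.V} {n : ℕ} : y ∈ T.sphere x n ↔ T.G.dist x y = n := by
  simp [sphere]

theorem mem_sphere_one {x y : T.V} : y ∈ T.sphere x 1 ↔ T.G.Adj x y := by
  rw [mem_sphere, SimpleGraph.dist_eq_one_iff_adj]

theorem sphere_zero (x : T.V) : T.sphere x 0 = {x} := by
  ext y
  simp [T.conn.dist_eq_zero_iff, eq_comm]

theorem card_sphere_one (x : T.V) : #(T.sphere x 1) = q + 1 := by
  rw [← T.degree x]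
  congr 1
  ext y
  simp

theorem card_filter_sphere_one_dist_eq_pred {x u : T.V} {m : ℕ} (h : T.G.dist x u = m + 1) :
    #{v ∈ T.sphere u 1 | T.G.dist x v = m} = 1 := by
  rw [card_eq_one_iff_existsUnique]
  simpa only [mem_filter, mem_sphere_one] using T.isTree.existsUnique_adj_dist_eq h

theorem card_filter_sphere_one_dist_eq_succ {x u : T.V} {m : ℕ} (h : T.G.dist x u = m) :
    #{v ∈ T.sphere u 1 | T.G.dist x v = m + 1} = sphereCoeff q (m + 1) := by
  rcases m with _ | m
  · rw [T.conn.dist_eq_zero_iff] at h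
    subst h
    rw [filter_true_of_mem fun v hv => T.mem_sphere.mp hv, card_sphere_one]
    rfl
  · have hsplit := card_filter_add_card_filter_not (s := T.sphere u 1)
      (p := fun v => T.G.dist x v = m + 1 + 1)
    have hparents : {v ∈ T.sphere u 1 | ¬T.G.dist x v = m + 1 + 1} =
        {v ∈ T.sphere u 1 | T.G.dist x v = m} := by
      refine filter_congr fun v hv => ?_
      have := T.isTree.dist_eq_dist_add_one_of_adj x (T.mem_sphere_one.mp hv)
      omega
    rw [hparents, T.card_filter_sphere_one_dist_eq_pred h, card_sphere_one] at hsplit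
    simp only [sphereCoeff]
    omega

theorem sum_sphere_sum_sphere_one {M : Type*} [AddCommMonoid M] (f : T.V → M) (x : T.V)
    (m : ℕ) : ∑ u ∈ T.sphere x m, ∑ v ∈ T.sphere u 1, f v =
      ∑ v ∈ T.sphere x (m + 1), f v + sphereCoeff q m • ∑ v ∈ T.sphere x (m - 1), f v := by
  rcases m with _ | m
  · simp [sphere_zero, sphereCoeff]
  classical
  have hdisj : Disjoint (T.sphere x (m + 2)) (T.sphere x m) :=
    disjoint_left.mpr fun v h1 h2 => by rw [mem_sphere] at h1 h2; omega
  have hswap : ∀ u v, u ∈ T.sphere x (m + 1) ∧ v ∈ T.sphere u 1 ↔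
      u ∈ {u ∈ T.sphere v 1 | T.G.dist x u = m + 1} ∧ v ∈ T.sphere x (m + 2) ∪ T.sphere x m := by
    intro u v
    simp only [mem_filter, mem_union, mem_sphere_one]
    simp only [mem_sphere]
    constructor
    · rintro ⟨hu, hadj⟩
      have := T.isTree.dist_eq_dist_add_one_of_adj x hadj
      exact ⟨⟨hadj.symm, hu⟩, by omega⟩
    · rintro ⟨⟨hadj, hu⟩, -⟩
      exact ⟨hu, hadj.symm⟩
  rw [sum_comm' hswap, sum_union hdisj]
  simp only [sum_const, Nat.add_one_sub_one, smul_sum]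
  congr 1
  · refine sum_congr rfl fun v hv => ?_
    rw [T.card_filter_sphere_one_dist_eq_pred (T.mem_sphere.mp hv), one_smul]
  · refine sum_congr rfl fun v hv => ?_
    rw [T.card_filter_sphere_one_dist_eq_succ (T.mem_sphere.mp hv)]

theorem sum_sphere_one_eq_of_lap_eq {f g : T.V → ℂ} {x y : T.V} (hxy : f x = g y)
    (h : T.lap f x = T.lap g y) : ∑ v ∈ T.sphere x 1, f v = ∑ w ∈ T.sphere y 1, g w := by
  rw [lap, lap, hxy, sub_right_inj] at h
  exact mul_left_cancel₀ (one_div_ne_zero (Nat.cast_add_one_ne_zero q)) h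

end HomTree

open HomTree in
theorem stmt2_general {q : ℕ} (T : HomTree q) (U : T.V → T.V → ℂ)
    (hU : ∀ x y : T.V, T.lap (fun x' => U x' y) x = T.lap (fun y' => U x y') y) :
    ∀ (x y : T.V) (m n : ℕ),
      ∑ x' ∈ T.sphere x m, ∑ y' ∈ T.sphere y n, U x' y' =
      ∑ x' ∈ T.sphere x n, ∑ y' ∈ T.sphere y m, U x' y' := by
  intro x y m n
  have hU₁ : ∀ x' y', ∑ v ∈ T.sphere x' 1, U v y' = ∑ w ∈ T.sphere y' 1, U x' w :=
    fun x' y' => T.sum_sphere_one_eq_of_lap_eq rfl (hU x' y')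
  refine eq_swap_of_rec (sphereCoeff q)
    (fun a b => ∑ x' ∈ T.sphere x a, ∑ y' ∈ T.sphere y b, U x' y') (fun a b => ?_) m n
  calc _ = ∑ y' ∈ T.sphere y b, ∑ x' ∈ T.sphere x a, ∑ v ∈ T.sphere x' 1, U v y' := by
        simp only [T.sum_sphere_sum_sphere_one, sum_add_distrib, ← smul_sum]
        rw [sum_comm (s := T.sphere y b), sum_comm (s := T.sphere y b)]
    _ = ∑ y' ∈ T.sphere y b, ∑ x' ∈ T.sphere x a, ∑ w ∈ T.sphere y' 1, U x' w := by
        simp only [hU₁]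
    _ = _ := by
        rw [sum_comm]
        simp only [T.sum_sphere_sum_sphere_one, sum_add_distrib, ← smul_sum]

open HomTree in
/-- discrete Ásgeirsson mean value theorem. -/
theorem stmt2 {q : ℕ} (hq : 2 ≤ q) (T : HomTree q) (U : T.V → T.V → ℂ)
    (hU : ∀ x y : T.V, T.lap (fun x' => U x' y) x = T.lap (fun y' => U x y') y) :
    ∀ (x y : T.V) (m n : ℕ),
      ∑ x' ∈ T.sphere x m, ∑ y' ∈ T.sphere y n, U x' y' =
      ∑ x' ∈ T.sphere x n, ∑ y' ∈ T.sphere y m, U x' y' :=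
  stmt2_general T U hU
end

section
/- (Inversion of the dual Abel transform.) For an even function F : ℤ → ℂ define G : ℕ → ℂ by G(0) = F(0) and, for n ≥ 1, G(n) = (2q/(q+1))·q^(−n/2)·F(n) + ((q−1)/(q+1))·q^(−n/2)·Σ_{k : −n < k < n, k ≡ n (mod 2)} F(k). Then for every h ∈ ℕ: if h = 0, G(0) = F(0); if h is odd, ((q^(1/2)+q^(−1/2))/2)·q^((h−1)/2)·G(h) − ((q−q^(−1))/2)·q^(−h/2)·Σ_{k odd, 0 < k < h} q^k·G(k) = F(h); and if h ≥ 2 is even, ((q^(1/2)+q^(−1/2))/2)·q^((h−1)/2)·G(h) − ((q^(1/2)−q^(−1/2))/2)·q^(−(h−1)/2)·G(0) − ((q−q^(−1))/2)·q^(−h/2)·Σ_{k even, 0 < k < h} q^k·G(k) = F(h). -/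
open scoped BigOperators

/-!
Write `r = q^{1/2}` and `S(n) = ∑_{|k| < n, k ≡ n (mod 2)} F(k)`. Clearing denominators, the
definition of `G` reads `(q + 1) r^n G(n) = 2q F(n) + (q - 1) S(n)` for `n ≥ 1`, and evenness of
`F` gives `S(n + 2) = S(n) + 2 F(n)`. Together they say
`(q + 1) q^n G(n) = r^{n+2} S(n+2) - r^n S(n)`, so the weighted sums `∑ q^k G(k)` over
`0 < k < h` of the parity of `h` telescope to `r^h S(h)`, up to the boundary term
`r^2 S(2) = q F(0) = q G(0)` when `h` is even (`S(1) = 0`). Eliminating `S(h)` between this and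
the relation at `n = h` leaves `F(h)`.
-/

theorem Finset.sum_Ico_filter_mod_two_eq_sub {M : Type*} [AddCommGroup M] (a b : ℕ → M)
    {n₀ : ℕ} (hab : ∀ n, n₀ ≤ n → a n = b (n + 2) - b n) (m : ℕ) :
    ∑ k ∈ (Finset.Ico n₀ (n₀ + 2 * m)).filter (fun k => k % 2 = n₀ % 2), a k =
      b (n₀ + 2 * m) - b n₀ := by
  induction m with
  | zero => simp
  | succ m ih =>
    have hset : (Finset.Ico n₀ (n₀ + 2 * (m + 1))).filter (fun k => k % 2 = n₀ % 2) =
        insert (n₀ + 2 * m)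
          ((Finset.Ico n₀ (n₀ + 2 * m)).filter (fun k => k % 2 = n₀ % 2)) := by
      ext k
      simp only [Finset.mem_filter, Finset.mem_Ico, Finset.mem_insert]
      omega
    rw [hset, Finset.sum_insert (by simp), ih, hab _ (by omega), mul_add, mul_one, ← add_assoc]
    abel

theorem Finset.Ioo_zero_filter_odd (h : ℕ) :
    (Finset.Ioo 0 h).filter (fun k => Odd k) =
      (Finset.Ico 1 h).filter (fun k => k % 2 = 1 % 2) := by
  ext k
  simp only [Finset.mem_filter, Finset.mem_Ioo, Finset.mem_Ico, Nat.odd_iff]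
  omega

theorem Finset.Ioo_zero_filter_even (h : ℕ) :
    (Finset.Ioo 0 h).filter (fun k => Even k) =
      (Finset.Ico 2 h).filter (fun k => k % 2 = 2 % 2) := by
  ext k
  simp only [Finset.mem_filter, Finset.mem_Ioo, Finset.mem_Ico, Nat.even_iff]
  omega

section ParityWindow

variable {M : Type*} [AddCommMonoid M]

noncomputable def parityWindowSum (F : ℤ → M) (n : ℕ) : M :=
  ∑ k ∈ (Finset.Ioo (-(n : ℤ)) n).filter (fun k => k % 2 = (n : ℤ) % 2), F k

theorem parityWindowSum_one (F : ℤ → M) : parityWindowSum F 1 = 0 := by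
  refine Finset.sum_eq_zero fun k hk => ?_
  simp only [Finset.mem_filter, Finset.mem_Ioo] at hk
  omega

theorem parityWindowSum_two (F : ℤ → M) : parityWindowSum F 2 = F 0 := by
  have : (Finset.Ioo (-((2 : ℕ) : ℤ)) (2 : ℕ)).filter
      (fun k => k % 2 = ((2 : ℕ) : ℤ) % 2) = {0} := by
    ext k
    simp only [Finset.mem_filter, Finset.mem_Ioo, Finset.mem_singleton]
    omega
  rw [parityWindowSum, this, Finset.sum_singleton]

theorem parityWindowSum_add_two (F : ℤ → M) {n : ℕ} (hn : n ≠ 0) :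
    parityWindowSum F (n + 2) = F n + (F (-n) + parityWindowSum F n) := by
  have hset : (Finset.Ioo (-((n + 2 : ℕ) : ℤ)) ((n + 2 : ℕ) : ℤ)).filter
        (fun k => k % 2 = ((n + 2 : ℕ) : ℤ) % 2) =
      insert (n : ℤ) (insert (-(n : ℤ))
        ((Finset.Ioo (-(n : ℤ)) n).filter (fun k => k % 2 = (n : ℤ) % 2))) := by
    ext k
    simp only [Finset.mem_filter, Finset.mem_Ioo, Finset.mem_insert]
    omega
  rw [parityWindowSum, hset, Finset.sum_insert, Finset.sum_insert, parityWindowSum]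
  · simp
  · simp only [Finset.mem_insert, Finset.mem_filter, Finset.mem_Ioo]
    omega

end ParityWindow

theorem dual_abel_weighted_sum_eq {K : Type*} [Field K] {r : K} {F : ℤ → K} {G : ℕ → K}
    (hF : ∀ k, F (-k) = F k)
    (hA : ∀ n, 1 ≤ n →
      (r ^ 2 + 1) * r ^ n * G n = 2 * r ^ 2 * F n + (r ^ 2 - 1) * parityWindowSum F n)
    {n₀ h : ℕ} (hn₀ : 1 ≤ n₀) (hh : n₀ ≤ h) (hpar : h % 2 = n₀ % 2) :
    (r ^ 2 + 1) *
        ∑ k ∈ (Finset.Ico n₀ h).filter (fun k => k % 2 = n₀ % 2), (r ^ 2) ^ k * G k =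
      r ^ h * parityWindowSum F h - r ^ n₀ * parityWindowSum F n₀ := by
  obtain ⟨m, rfl⟩ : ∃ m, h = n₀ + 2 * m := ⟨(h - n₀) / 2, by omega⟩
  rw [Finset.mul_sum]
  refine Finset.sum_Ico_filter_mod_two_eq_sub _ (fun n => r ^ n * parityWindowSum F n)
    (fun n hn => ?_) m
  rw [parityWindowSum_add_two F (by omega), hF]
  linear_combination r ^ n * hA n (by omega)

-- `u` stands for `r ^ (h - 1)` and `g` for `G 0`, which is absent (`g = 0`) when `h` is odd.
theorem dual_abel_inversion_identity {K : Type*} [Field K] [CharZero K] {r u Gh Fh S T g : K}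
    (hr : r ≠ 0) (hu : u ≠ 0) (hr2 : r ^ 2 + 1 ≠ 0)
    (hG : (r ^ 2 + 1) * (r * u) * Gh = 2 * r ^ 2 * Fh + (r ^ 2 - 1) * S)
    (hT : (r ^ 2 + 1) * T + r ^ 2 * g = r * u * S) :
    (r + r⁻¹) / 2 * u * Gh - (r - r⁻¹) / 2 * u⁻¹ * g
      - (r ^ 2 - (r ^ 2)⁻¹) / 2 * (r * u)⁻¹ * T = Fh := by
  have hT' : T = (r * u * S - r ^ 2 * g) / (r ^ 2 + 1) := by
    rw [eq_div_iff hr2]; linear_combination hT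
  have hG' : Gh = (2 * r ^ 2 * Fh + (r ^ 2 - 1) * S) / ((r ^ 2 + 1) * (r * u)) := by
    rw [eq_div_iff (by positivity)]; linear_combination hG
  rw [hT', hG']
  field_simp
  ring

namespace HomTree

theorem qpow_div_two_natCast (q n : ℕ) : qpow q ((n : ℝ) / 2) = qpow q (1 / 2) ^ n := by
  rw [qpow, qpow, ← Complex.ofReal_pow, ← Real.rpow_mul_natCast (Nat.cast_nonneg q)]
  ring_nf

theorem qpow_neg_div_two_natCast (q n : ℕ) :
    qpow q (-(n : ℝ) / 2) = (qpow q (1 / 2) ^ n)⁻¹ := by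
  rw [← qpow_div_two_natCast, qpow, qpow, neg_div, Real.rpow_neg (Nat.cast_nonneg q),
    Complex.ofReal_inv]

theorem qpow_half_sq (q : ℕ) : qpow q (1 / 2) ^ 2 = q := by
  rw [← qpow_div_two_natCast, qpow]
  norm_num

theorem qpow_half_ne_zero {q : ℕ} (hq : q ≠ 0) : qpow q (1 / 2) ≠ 0 := by
  rw [qpow, Complex.ofReal_ne_zero]
  exact (Real.rpow_pos_of_pos (by exact_mod_cast Nat.pos_of_ne_zero hq) _).ne'

theorem dual_abel_relation {q n : ℕ} (hq : q ≠ 0) {Gn Fn S : ℂ}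
    (hG : Gn = 2 * (q : ℂ) / ((q : ℂ) + 1) * qpow q (-(n : ℝ) / 2) * Fn +
      ((q : ℂ) - 1) / ((q : ℂ) + 1) * qpow q (-(n : ℝ) / 2) * S) :
    ((q : ℂ) + 1) * qpow q (1 / 2) ^ n * Gn = 2 * q * Fn + (q - 1) * S := by
  have hr : qpow q (1 / 2) ≠ 0 := qpow_half_ne_zero hq
  have hq1 : (q : ℂ) + 1 ≠ 0 := by exact_mod_cast q.succ_ne_zero
  rw [hG, qpow_neg_div_two_natCast]
  field_simp

theorem qpow_dual_abel_inversion {q h : ℕ} (hq : q ≠ 0) (hh : 1 ≤ h) {Gh Fh S g T : ℂ}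
    (hG : ((q : ℂ) + 1) * qpow q (1 / 2) ^ h * Gh = 2 * q * Fh + (q - 1) * S)
    (hT : ((q : ℂ) + 1) * T + q * g = qpow q (1 / 2) ^ h * S) :
    (qpow q (1 / 2) + qpow q (-(1 : ℝ) / 2)) / 2 * qpow q (((h : ℝ) - 1) / 2) * Gh
        - (qpow q (1 / 2) - qpow q (-(1 : ℝ) / 2)) / 2 * qpow q (-((h : ℝ) - 1) / 2) * g
        - ((q : ℂ) - (q : ℂ)⁻¹) / 2 * qpow q (-(h : ℝ) / 2) * T = Fh := by
  have hcast : (h : ℝ) - 1 = ((h - 1 : ℕ) : ℝ) := by rw [Nat.cast_sub hh, Nat.cast_one]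
  rw [show -(1 : ℝ) / 2 = -((1 : ℕ) : ℝ) / 2 by norm_num, hcast, qpow_div_two_natCast,
    qpow_neg_div_two_natCast, qpow_neg_div_two_natCast, qpow_neg_div_two_natCast, pow_one]
  rw [← qpow_half_sq q] at hG hT ⊢
  set r := qpow q (1 / 2)
  have hr : r ≠ 0 := qpow_half_ne_zero hq
  have hr2 : r ^ 2 + 1 ≠ 0 := by rw [qpow_half_sq]; exact_mod_cast q.succ_ne_zero
  have hsucc : r * r ^ (h - 1) = r ^ h := mul_pow_sub_one (by omega) r
  rw [← hsucc] at hG hT ⊢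
  exact dual_abel_inversion_identity hr (pow_ne_zero _ hr) hr2 hG hT

end HomTree

open HomTree in
/-- inversion of the dual Abel transform. -/
theorem stmt7 (q : ℕ) (hq : 2 ≤ q) (F : ℤ → ℂ) (hF : ∀ k : ℤ, F (-k) = F k)
    (G : ℕ → ℂ) (hG0 : G 0 = F 0)
    (hG : ∀ n : ℕ, 1 ≤ n → G n =
      (2 * (q : ℂ) / ((q : ℂ) + 1)) * HomTree.qpow q (-(n : ℝ) / 2) * F n +
      (((q : ℂ) - 1) / ((q : ℂ) + 1)) * HomTree.qpow q (-(n : ℝ) / 2) *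
        ∑ k ∈ (Finset.Ioo (-(n : ℤ)) (n : ℤ)).filter (fun k => k % 2 = (n : ℤ) % 2), F k) :
    G 0 = F 0 ∧
    (∀ h : ℕ, Odd h →
      ((HomTree.qpow q ((1 : ℝ)/2) + HomTree.qpow q (-(1 : ℝ)/2)) / 2) *
          HomTree.qpow q (((h : ℝ) - 1) / 2) * G h
        - (((q : ℂ) - ((q : ℂ))⁻¹) / 2) * HomTree.qpow q (-(h : ℝ) / 2) *
          ∑ k ∈ (Finset.Ioo 0 h).filter (fun k => Odd k), (q : ℂ) ^ k * G k
      = F (h : ℤ)) ∧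
    (∀ h : ℕ, 2 ≤ h → Even h →
      ((HomTree.qpow q ((1 : ℝ)/2) + HomTree.qpow q (-(1 : ℝ)/2)) / 2) *
          HomTree.qpow q (((h : ℝ) - 1) / 2) * G h
        - ((HomTree.qpow q ((1 : ℝ)/2) - HomTree.qpow q (-(1 : ℝ)/2)) / 2) *
          HomTree.qpow q (-((h : ℝ) - 1) / 2) * G 0
        - (((q : ℂ) - ((q : ℂ))⁻¹) / 2) * HomTree.qpow q (-(h : ℝ) / 2) *
          ∑ k ∈ (Finset.Ioo 0 h).filter (fun k => Even k), (q : ℂ) ^ k * G k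
      = F (h : ℤ)) := by
  have hq0 : q ≠ 0 := by omega
  set r := qpow q (1 / 2)
  have hqr : (q : ℂ) = r ^ 2 := (qpow_half_sq q).symm
  have hA : ∀ n, 1 ≤ n →
      (r ^ 2 + 1) * r ^ n * G n = 2 * r ^ 2 * F n + (r ^ 2 - 1) * parityWindowSum F n := by
    intro n hn
    rw [← hqr]
    exact dual_abel_relation hq0 (hG n hn)
  refine ⟨hG0, fun h hodd => ?_, fun h hh heven => ?_⟩
  · rw [Nat.odd_iff] at hodd
    have hT := dual_abel_weighted_sum_eq hF hA le_rfl (by omega) hodd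
    rw [parityWindowSum_one, mul_zero, sub_zero, ← Finset.Ioo_zero_filter_odd, ← hqr]
      at hT
    have hinv := qpow_dual_abel_inversion hq0 (by omega : 1 ≤ h) (g := 0)
      (dual_abel_relation hq0 (hG h (by omega)))
      (by rw [mul_zero (q : ℂ), add_zero]; exact hT)
    rwa [mul_zero, sub_zero] at hinv
  · rw [Nat.even_iff] at heven
    have hT := dual_abel_weighted_sum_eq hF hA (by norm_num) hh heven
    rw [parityWindowSum_two, ← Finset.Ioo_zero_filter_even, ← hqr, ← hG0] at hT
    exact qpow_dual_abel_inversion hq0 (by omega)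
      (dual_abel_relation hq0 (hG h (by omega))) (by rw [hT, sub_add_cancel]; rfl)
end

section
/- (Inversion of the Abel transform.) Let F : ℕ → ℂ satisfy sup_{n ≥ 1} n^k·q^(n/2)·|F(n)| < ∞ for every k ∈ ℕ. Define G : ℤ → ℂ by G(h) = Σ_{k=0}^{∞} q^(|h|/2 + k)·(F(|h|+2k) − F(|h|+2k+2)) (the series converges absolutely). Then for every n ∈ ℕ the series Σ_{k=0}^{∞} q^(−n/2 − k)·(G(n+2k) − G(n+2k+2)) converges absolutely and equals F(n). -/
/-!
Write `A_N(k) = q^{N/2+k} (F(N+2k) - F(N+2k+2))` for the `k`-th term of the Abel transform at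
`N ≥ 0`. Reindexing gives `A_{N+2}(k) = A_N(k+1)`, so `G(N) - G(N+2) = A_N(0) = q^{N/2}(F N - F(N+2))`:
the inverse series is the telescoping series `∑ₖ (F(n+2k) - F(n+2k+2)) = F(n)`.
The decay `n² q^{n/2} |F n| ≤ C` makes `n ↦ q^{n/2} F n` absolutely summable, which gives every
convergence statement needed.
-/

open scoped BigOperators

open HomTree in
/-- The Abel transform `G = A F` of a radial function on the tree. -/
noncomputable def abelG (q : ℕ) (F : ℕ → ℂ) (h : ℤ) : ℂ :=
  ∑' k : ℕ, HomTree.qpow q ((h.natAbs : ℝ) / 2 + (k : ℝ)) *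
    (F (h.natAbs + 2 * k) - F (h.natAbs + 2 * k + 2))

open HomTree

theorem Summable.hasSum_sub_succ {G : Type*} [AddCommGroup G] [TopologicalSpace G]
    [IsTopologicalAddGroup G] {f : ℕ → G} (hf : Summable f) :
    HasSum (fun n => f n - f (n + 1)) (f 0) := by
  have hs := ((summable_nat_add_iff 1).mpr hf).hasSum
  simpa using hs.zero_add.sub hs

theorem summable_rpow_half_mul_norm {E : Type*} [SeminormedAddCommGroup E] {b : ℝ} (hb : 0 ≤ b)
    {F : ℕ → E} {C : ℝ} (hC : ∀ n : ℕ, 1 ≤ n → (n : ℝ) ^ 2 * b ^ ((n : ℝ) / 2) * ‖F n‖ ≤ C) :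
    Summable fun n : ℕ => b ^ ((n : ℝ) / 2) * ‖F n‖ := by
  rw [← summable_nat_add_iff 1]
  refine Summable.of_nonneg_of_le (fun n => by positivity) (fun n => ?_)
    (((summable_nat_add_iff 1).mpr (Real.summable_one_div_nat_pow.mpr one_lt_two)).mul_left C)
  have hn : (0 : ℝ) < ((n + 1 : ℕ) : ℝ) ^ 2 := by positivity
  rw [mul_one_div, le_div_iff₀ hn, mul_comm, ← mul_assoc]
  exact hC (n + 1) n.succ_pos

theorem summable_of_summable_rpow_half_mul_norm {E : Type*} [NormedAddCommGroup E]
    [CompleteSpace E] {b : ℝ} (hb : 1 ≤ b) {F : ℕ → E}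
    (h : Summable fun n : ℕ => b ^ ((n : ℝ) / 2) * ‖F n‖) : Summable F :=
  h.of_norm_bounded fun n =>
    le_mul_of_one_le_left (norm_nonneg _) (Real.one_le_rpow hb (by positivity))

namespace HomTree

variable {q : ℕ}

theorem qpow_add (hq : 0 < q) (x y : ℝ) : qpow q (x + y) = qpow q x * qpow q y := by
  simp only [qpow, Real.rpow_add (Nat.cast_pos.mpr hq), Complex.ofReal_mul]

theorem qpow_neg_mul_qpow (hq : 0 < q) (x : ℝ) : qpow q (-x) * qpow q x = 1 := by
  rw [← qpow_add hq, neg_add_cancel, qpow, Real.rpow_zero, Complex.ofReal_one]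

theorem norm_qpow (x : ℝ) : ‖qpow q x‖ = (q : ℝ) ^ x := by
  rw [qpow, Complex.norm_real, Real.norm_of_nonneg (by positivity)]

end HomTree

noncomputable def abelTerm (q : ℕ) (F : ℕ → ℂ) (N k : ℕ) : ℂ :=
  qpow q ((N : ℝ) / 2 + k) * (F (N + 2 * k) - F (N + 2 * k + 2))

section AbelTerm

variable {q : ℕ} {F : ℕ → ℂ}

theorem abelG_eq_tsum_abelTerm (h : ℤ) : abelG q F h = ∑' k, abelTerm q F h.natAbs k := rfl

theorem abelTerm_add_two (N k : ℕ) : abelTerm q F (N + 2) k = abelTerm q F N (k + 1) := by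
  simp only [abelTerm]
  congr 1
  · push_cast; ring_nf
  · ring_nf

theorem abelTerm_zero (N : ℕ) : abelTerm q F N 0 = qpow q ((N : ℝ) / 2) * (F N - F (N + 2)) := by
  simp [abelTerm]

theorem norm_abelTerm_le (hq : 1 ≤ q) (N k : ℕ) :
    ‖abelTerm q F N k‖ ≤ (q : ℝ) ^ (((N + 2 * k : ℕ) : ℝ) / 2) * ‖F (N + 2 * k)‖
      + (q : ℝ) ^ (((N + 2 * k + 2 : ℕ) : ℝ) / 2) * ‖F (N + 2 * k + 2)‖ := by
  have hq' : (1 : ℝ) ≤ q := Nat.one_le_cast.mpr hq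
  have hexp : ((N : ℝ) / 2 + k) = ((N + 2 * k : ℕ) : ℝ) / 2 := by push_cast; ring
  have hmono : (q : ℝ) ^ (((N + 2 * k : ℕ) : ℝ) / 2) ≤ (q : ℝ) ^ (((N + 2 * k + 2 : ℕ) : ℝ) / 2) :=
    Real.rpow_le_rpow_of_exponent_le hq' (by push_cast; linarith)
  calc ‖abelTerm q F N k‖
      ≤ (q : ℝ) ^ (((N + 2 * k : ℕ) : ℝ) / 2) * (‖F (N + 2 * k)‖ + ‖F (N + 2 * k + 2)‖) := by
        rw [abelTerm, norm_mul, norm_qpow, hexp]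
        gcongr
        exact norm_sub_le _ _
    _ ≤ _ := by
        rw [mul_add]
        gcongr

theorem summable_abelTerm (hq : 1 ≤ q)
    (hw : Summable fun n : ℕ => (q : ℝ) ^ ((n : ℝ) / 2) * ‖F n‖) (N : ℕ) :
    Summable (abelTerm q F N) := by
  have hinj : ∀ c : ℕ, Function.Injective fun k : ℕ => N + 2 * k + c :=
    fun c a b h => by simp only at h; omega
  refine Summable.of_norm_bounded ((hw.comp_injective (hinj 0)).add (hw.comp_injective (hinj 2)))
    fun k => ?_
  simpa using norm_abelTerm_le hq N k

theorem abelG_sub_abelG_add_two {N : ℕ} (hs : Summable (abelTerm q F N)) :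
    abelG q F N - abelG q F (N + 2) = qpow q ((N : ℝ) / 2) * (F N - F (N + 2)) := by
  have hN2 : ((N : ℤ) + 2).natAbs = N + 2 := by omega
  rw [abelG_eq_tsum_abelTerm, abelG_eq_tsum_abelTerm, hN2, Int.natAbs_natCast, ← abelTerm_zero]
  simp only [abelTerm_add_two]
  rw [hs.tsum_eq_zero_add, add_sub_cancel_right]

end AbelTerm

open HomTree in
/-- inversion of the Abel transform. -/
theorem stmt8 (q : ℕ) (hq : 2 ≤ q) (F : ℕ → ℂ)
    (hF : ∀ k : ℕ, ∃ C : ℝ, ∀ n : ℕ, 1 ≤ n →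
      (n : ℝ) ^ k * (q : ℝ) ^ ((n : ℝ) / 2) * ‖F n‖ ≤ C) :
    (∀ h : ℤ, Summable (fun k : ℕ =>
      HomTree.qpow q ((h.natAbs : ℝ) / 2 + (k : ℝ)) *
        (F (h.natAbs + 2 * k) - F (h.natAbs + 2 * k + 2)))) ∧
    ∀ n : ℕ,
      Summable (fun k : ℕ =>
        HomTree.qpow q (-(n : ℝ) / 2 - (k : ℝ)) *
          (abelG q F ((n : ℤ) + 2 * k) - abelG q F ((n : ℤ) + 2 * k + 2))) ∧
      ∑' k : ℕ, HomTree.qpow q (-(n : ℝ) / 2 - (k : ℝ)) *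
          (abelG q F ((n : ℤ) + 2 * k) - abelG q F ((n : ℤ) + 2 * k + 2)) = F n := by
  have hq1 : 1 ≤ q := by omega
  obtain ⟨C, hC⟩ := hF 2
  have hw := summable_rpow_half_mul_norm (Nat.cast_nonneg q) hC
  have hs := summable_abelTerm hq1 hw
  refine ⟨fun h => hs h.natAbs, fun n => ?_⟩
  have hterm : ∀ k : ℕ, qpow q (-(n : ℝ) / 2 - k) *
      (abelG q F ((n : ℤ) + 2 * k) - abelG q F ((n : ℤ) + 2 * k + 2))
        = F (n + 2 * k) - F (n + 2 * (k + 1)) := fun k => by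
    have h := abelG_sub_abelG_add_two (hs (n + 2 * k))
    push_cast at h
    rw [h, ← mul_assoc, show -(n : ℝ) / 2 - k = -((n + 2 * k) / 2) by ring, qpow_neg_mul_qpow hq1,
      one_mul, mul_add, mul_one, ← add_assoc]
  have hFs : Summable fun k => F (n + 2 * k) :=
    (summable_of_summable_rpow_half_mul_norm (Nat.one_le_cast.mpr hq1) hw).comp_injective
      fun a b h => by omega
  have hsum := hFs.hasSum_sub_succ
  simp only [← hterm, mul_zero, add_zero] at hsum
  exact ⟨hsum.summable, hsum.tsum_eq⟩
end

section
/- (Finite propagation speed.) Let u solve the Cauchy problem for the shifted wave equation on T_q with data f, g : T_q → ℂ supported in the ball B(x_0,N) = {y : d(y,x_0) ≤ N}. Then u(x,n) = 0 whenever d(x,x_0) > |n| + N; that is, supp u ⊂ {(x,n) ∈ T_q × ℤ : d(x,x_0) ≤ |n| + N}. -/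
open scoped BigOperators

/-!
The value `u(x, n + 1)` is determined by `u(x, n - 1)` and by the values of `u(·, n)` on the
neighbours of `x`, so the support of `u(·, n)` can grow by at most one per time step. The Cauchy
data place the supports of `u(·, 0)` and `u(·, ±1)` in the balls of radius `N` and `N + 1`; a
two-step induction gives the forward statement, and the equation is invariant under `n ↦ -n`.
-/

namespace HomTree

variable {q : ℕ} (T : HomTree q)

lemma sum_sphere_one_eq_zero {φ : T.V → ℂ} {x₀ x : T.V} {R : ℕ}
    (hφ : ∀ y, R < T.G.dist y x₀ → φ y = 0) (hx : R + 1 < T.G.dist x x₀) :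
    ∑ y ∈ T.sphere x 1, φ y = 0 := by
  refine Finset.sum_eq_zero fun y hy => hφ y ?_
  have hxy : T.G.dist x y = 1 := by simpa [sphere] using hy
  have := T.conn.dist_triangle (u := x) (v := y) (w := x₀)
  omega

variable {T}

lemma IsWaveSol.comp_neg {u : T.V → ℤ → ℂ} (hu : IsWaveSol T u) :
    IsWaveSol T (fun x n => u x (-n)) := by
  intro x n
  have h := hu x (-n)
  rwa [add_comm, show -n - 1 = -(n + 1) by ring, show -n + 1 = -(n - 1) by ring] at h

lemma IsWaveSol.eq_zero_of_dist_gt {u : T.V → ℤ → ℂ} (hu : IsWaveSol T u) {x₀ : T.V} {N : ℕ}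
    (h₀ : ∀ y, N < T.G.dist y x₀ → u y 0 = 0) (h₁ : ∀ y, N + 1 < T.G.dist y x₀ → u y 1 = 0)
    (k : ℕ) (x : T.V) (hx : k + N < T.G.dist x x₀) : u x k = 0 := by
  suffices key : ∀ k : ℕ, (∀ y, k + N < T.G.dist y x₀ → u y k = 0) ∧
      (∀ y, k + 1 + N < T.G.dist y x₀ → u y (k + 1) = 0) from (key k).1 x hx
  intro k
  induction k with
  | zero => exact ⟨by simpa using h₀, by simpa [add_comm] using h₁⟩
  | succ k ih =>
    refine ⟨by exact_mod_cast ih.2, fun y hy => ?_⟩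
    have hwave := hu y (k + 1)
    rw [sum_sphere_one_eq_zero T ih.2 (by omega), mul_zero, add_sub_cancel_right,
      ih.1 y (by omega), add_zero] at hwave
    exact_mod_cast hwave

lemma IsCauchy.eq_zero_at_one_of_dist_gt {f g : T.V → ℂ} {u : T.V → ℤ → ℂ}
    (hu : IsCauchy T f g u) {x₀ : T.V} {N : ℕ}
    (hf : ∀ y, N < T.G.dist y x₀ → f y = 0) (hg : ∀ y, N < T.G.dist y x₀ → g y = 0)
    (x : T.V) (hx : N + 1 < T.G.dist x x₀) : u x 1 = 0 ∧ u x (-1) = 0 := by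
  obtain ⟨hwave, hf₀, hg₀⟩ := hu
  have hsum := hwave x 0
  rw [sum_sphere_one_eq_zero T (fun y hy => (hf₀ y).trans (hf y hy)) hx, mul_zero] at hsum
  have hdiff := hg₀ x
  rw [hg x (by omega)] at hdiff
  norm_num at hsum
  constructor
  · linear_combination hsum / 2 + hdiff
  · linear_combination hsum / 2 - hdiff

end HomTree

open HomTree in
theorem stmt12_general {q : ℕ} (T : HomTree q) (f g : T.V → ℂ)
    (x₀ : T.V) (N : ℕ)
    (hf : ∀ y : T.V, N < T.G.dist y x₀ → f y = 0)
    (hg : ∀ y : T.V, N < T.G.dist y x₀ → g y = 0)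
    (u : T.V → ℤ → ℂ) (hu : HomTree.IsCauchy T f g u) :
    ∀ (x : T.V) (n : ℤ), n.natAbs + N < T.G.dist x x₀ → u x n = 0 := by
  have h₀ : ∀ y, N < T.G.dist y x₀ → u y 0 = 0 := fun y hy => (hu.2.1 y).trans (hf y hy)
  have h₁ := hu.eq_zero_at_one_of_dist_gt hf hg
  intro x n hn
  rcases Int.natAbs_eq n with h | h <;> rw [h]
  · exact hu.1.eq_zero_of_dist_gt h₀ (fun y hy => (h₁ y hy).1) _ x hn
  · exact hu.1.comp_neg.eq_zero_of_dist_gt (by simpa using h₀) (fun y hy => (h₁ y hy).2) _ x hn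

open HomTree in
/-- finite propagation speed. -/
theorem stmt12 {q : ℕ} (hq : 2 ≤ q) (T : HomTree q) (f g : T.V → ℂ)
    (x₀ : T.V) (N : ℕ)
    (hf : ∀ y : T.V, N < T.G.dist y x₀ → f y = 0)
    (hg : ∀ y : T.V, N < T.G.dist y x₀ → g y = 0)
    (u : T.V → ℤ → ℂ) (hu : HomTree.IsCauchy T f g u) :
    ∀ (x : T.V) (n : ℤ), n.natAbs + N < T.G.dist x x₀ → u x n = 0 :=
  stmt12_general T f g x₀ N hf hg u hu
end

section
/- (Nonnegativity of the potential energy.) For every finitely supported function v : T_q → ℂ, Σ_{(x,y) : d(x,y) = 2} |v(x) − v(y)|² ≥ 2·(q−1)²·Σ_{x} |v(x)|², where the sum on the left is over all ordered pairs (x,y) of vertices at distance 2. Equivalently, (1/(4q))·Σ_{(x,y) : d(x,y)=2} |(v(x)−v(y))/2|² − ((q−1)²/(8q))·Σ_x |v(x)|² ≥ 0. -/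
/-!
A pair of vertices at distance 2 in a tree has a unique midpoint, so the left-hand side equals
`∑ m, ∑ x ∼ m, ∑ y ∼ m, ‖v x - v y‖²`; expanding each inner sum turns it into
`2 (q + 1)² ‖v‖² - 2 ‖A v‖²`, where `A` is the adjacency operator. Orient the tree away from a
root `o` lying far outside the support of `v`: every relevant vertex then has one parent and `q`
children, and Cauchy–Schwarz on this split gives `‖A v‖² ≤ 4 q ‖v‖²`. Since
`2 (q + 1)² - 8 q = 2 (q - 1)²`, the inequality follows; the second form is a rescaling of it.
-/

open scoped BigOperators

open Finset

theorem Finset.sum_sum_eq_sum_card_nsmul {ι κ M : Type*} [AddCommMonoid M] {s : Finset ι}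
    {t : Finset κ} {A : ι → Finset κ} {B : κ → Finset ι} (hAB : ∀ i j, j ∈ A i ↔ i ∈ B j)
    (hB : ∀ j ∈ t, B j ⊆ s) {f : κ → M} (hf : ∀ j ∉ t, f j = 0) :
    ∑ i ∈ s, ∑ j ∈ A i, f j = ∑ j ∈ t, #(B j) • f j := by
  classical
  calc ∑ i ∈ s, ∑ j ∈ A i, f j = ∑ i ∈ s, ∑ j ∈ A i with j ∈ t, f j :=
        sum_congr rfl fun i _ =>
          (sum_filter_of_ne fun j _ h => by_contra fun hj => h (hf j hj)).symm
    _ = ∑ j ∈ t, ∑ i ∈ B j, f j := sum_comm' fun i j => by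
        simp only [mem_filter, hAB]
        exact ⟨fun h => ⟨h.2.1, h.2.2⟩, fun h => ⟨hB j h.2 h.1, h⟩⟩
    _ = ∑ j ∈ t, #(B j) • f j := by simp only [sum_const]

theorem norm_sum_sq_le_card_mul {ι E : Type*} [SeminormedAddCommGroup E] (s : Finset ι)
    (f : ι → E) : ‖∑ i ∈ s, f i‖ ^ 2 ≤ #s * ∑ i ∈ s, ‖f i‖ ^ 2 :=
  (pow_le_pow_left₀ (norm_nonneg _) (norm_sum_le s f) 2).trans (sq_sum_le_card_mul_sum_sq ..)

theorem sum_sum_norm_sub_sq {ι E : Type*} [NormedAddCommGroup E] [InnerProductSpace ℝ E]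
    (s : Finset ι) (f : ι → E) :
    ∑ i ∈ s, ∑ j ∈ s, ‖f i - f j‖ ^ 2 = 2 * #s * ∑ i ∈ s, ‖f i‖ ^ 2 - 2 * ‖∑ i ∈ s, f i‖ ^ 2 := by
  simp only [norm_sub_sq_real, sum_add_distrib, sum_sub_distrib, sum_const, nsmul_eq_mul,
    ← mul_sum, ← inner_sum, ← sum_inner, real_inner_self_eq_norm_sq]
  ring

namespace SimpleGraph

variable {V : Type*} {G : SimpleGraph V}

theorem IsAcyclic.dist_eq_two_iff (hG : G.IsAcyclic) {x y : V} :
    G.dist x y = 2 ↔ x ≠ y ∧ ∃ m, G.Adj m x ∧ G.Adj m y := by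
  classical
  rw [dist, ENat.toNat_eq_iff two_ne_zero, Nat.cast_ofNat, edist_eq_two_iff]
  constructor
  · rintro ⟨hne, -, m, hm⟩
    exact ⟨hne, m, (G.mem_commonNeighbors.mp hm).1.symm, (G.mem_commonNeighbors.mp hm).2.symm⟩
  · rintro ⟨hne, m, hmx, hmy⟩
    refine ⟨hne, fun hxy => ?_, m, G.mem_commonNeighbors.mpr ⟨hmx.symm, hmy.symm⟩⟩
    exact hG.cliqueFree le_rfl {x, y, m} (is3Clique_triple_iff.mpr ⟨hxy, hmx.symm, hmy.symm⟩)

theorem Reachable.exists_adj_dist_lt {o x : V} (h : G.Reachable o x) (hne : o ≠ x) :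
    ∃ y, G.Adj x y ∧ G.dist o y < G.dist o x := by
  obtain ⟨p, hp⟩ := h.exists_walk_length_eq_dist
  have hnil : ¬p.Nil := fun hn => hne hn.eq
  refine ⟨p.penultimate, (p.adj_penultimate hnil).symm, ?_⟩
  have := dist_le p.dropLast
  have := h.pos_dist_of_ne hne
  rw [p.length_dropLast] at *
  omega

theorem IsAcyclic.eq_of_adj_of_dist_lt (hG : G.IsAcyclic) {o x a b : V} (h : G.Reachable o x)
    (ha : G.Adj x a) (hb : G.Adj x b) (hda : G.dist o a < G.dist o x)
    (hdb : G.dist o b < G.dist o x) : a = b := by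
  classical
  obtain ⟨p, hp, -⟩ := h.exists_path_of_dist
  have key : ∀ w, G.Adj x w → G.dist o w < G.dist o x → w = p.penultimate := by
    intro w hw hdw
    obtain ⟨q, hq, hql⟩ := (h.trans hw.reachable).exists_path_of_dist
    have hx : x ∉ q.support := fun hx =>
      ((dist_le _).trans (q.length_takeUntil_le_length hx)).not_gt (hql ▸ hdw)
    exact hG.eq_penultimate_of_adj_end hp hw
      (hG.mem_support_of_ne_mem_support_of_adj_of_isPath hp hq hw hx)
  rw [key a ha hda, key b hb hdb]

theorem IsAcyclic.eq_of_adj_of_adj (hG : G.IsAcyclic) {x y m m' : V} (hxy : x ≠ y)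
    (hmx : G.Adj m x) (hmy : G.Adj m y) (hm'x : G.Adj m' x) (hm'y : G.Adj m' y) : m = m' := by
  have hd : G.dist x y = 2 := hG.dist_eq_two_iff.mpr ⟨hxy, m, hmx, hmy⟩
  refine hG.eq_of_adj_of_dist_lt (o := x) (hmx.symm.reachable.trans hmy.reachable) hmy.symm
    hm'y.symm ?_ ?_ <;> rw [hd, dist_comm, dist_eq_one_iff_adj.mpr ‹_›] <;> omega

section LocallyFinite

variable [G.LocallyFinite]

variable (G) in
noncomputable def parentFinset (o x : V) : Finset V :=
  {y ∈ G.neighborFinset x | G.dist o y < G.dist o x}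

variable (G) in
noncomputable def childFinset (o x : V) : Finset V :=
  {y ∈ G.neighborFinset x | G.dist o x < G.dist o y}

theorem mem_parentFinset_iff_mem_childFinset {o x y : V} :
    y ∈ G.parentFinset o x ↔ x ∈ G.childFinset o y := by
  simp only [parentFinset, childFinset, mem_filter, mem_neighborFinset, adj_comm]

theorem parentFinset_subset_neighborFinset (o x : V) : G.parentFinset o x ⊆ G.neighborFinset x :=
  filter_subset ..

theorem childFinset_subset_neighborFinset (o x : V) : G.childFinset o x ⊆ G.neighborFinset x :=
  filter_subset ..

theorem IsAcyclic.card_parentFinset (hG : G.IsAcyclic) {o x : V} (h : G.Reachable o x)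
    (hne : o ≠ x) : #(G.parentFinset o x) = 1 := by
  obtain ⟨y, hy, hdy⟩ := h.exists_adj_dist_lt hne
  refine card_eq_one.mpr ⟨y, eq_singleton_iff_unique_mem.mpr ⟨?_, fun z hz => ?_⟩⟩
  · exact mem_filter.mpr ⟨(G.mem_neighborFinset ..).mpr hy, hdy⟩
  · obtain ⟨hz, hdz⟩ := mem_filter.mp hz
    exact hG.eq_of_adj_of_dist_lt h ((G.mem_neighborFinset ..).mp hz) hy hdz hdy

theorem IsTree.sum_neighborFinset_eq_add {M : Type*} [AddCommMonoid M] (hG : G.IsTree) (o x : V)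
    (f : V → M) :
    ∑ y ∈ G.neighborFinset x, f y =
      ∑ y ∈ G.parentFinset o x, f y + ∑ y ∈ G.childFinset o x, f y := by
  have hchild : G.childFinset o x = {y ∈ G.neighborFinset x | ¬G.dist o y < G.dist o x} :=
    filter_congr fun y hy => by
      have := hG.dist_eq_dist_add_one_of_adj o ((G.mem_neighborFinset ..).mp hy)
      omega
  rw [hchild, parentFinset, sum_filter_add_sum_filter_not]

theorem IsTree.card_childFinset {q : ℕ} (hG : G.IsTree) (hreg : G.IsRegularOfDegree (q + 1))
    {o x : V} (hne : o ≠ x) : #(G.childFinset o x) = q := by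
  have := hG.sum_neighborFinset_eq_add o x (fun _ => 1)
  simp only [sum_const, smul_eq_mul, mul_one, card_neighborFinset_eq_degree, hreg.degree_eq,
    hG.isAcyclic.card_parentFinset (hG.connected o x) hne] at this
  omega

theorem IsTree.infinite_of_isRegularOfDegree {d : ℕ} (hG : G.IsTree)
    (hreg : G.IsRegularOfDegree d) (hd : 2 ≤ d) : Infinite V := by
  by_contra hfin
  rw [not_infinite_iff_finite] at hfin
  obtain ⟨x⟩ := hG.connected.nonempty
  obtain ⟨y, hxy⟩ := (G.degree_pos_iff_exists_adj x).mp (by rw [hreg.degree_eq]; omega)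
  have : Nontrivial V := ⟨⟨x, y, hxy.ne⟩⟩
  obtain ⟨u, -, -, hu, -⟩ := hG.exists_ne_and_degree_eq_one
  rw [hreg.degree_eq] at hu
  omega

theorem IsAcyclic.tsum_dist_eq_two_eq_sum_sum_neighborFinset {M : Type*} [AddCommMonoid M]
    [TopologicalSpace M] (hG : G.IsAcyclic) {s t : Finset V}
    (hts : ∀ y ∈ t, G.neighborFinset y ⊆ s) {g : V → V → M} (hg : ∀ x, g x x = 0)
    (hgt : ∀ x y, x ∉ t → y ∉ t → g x y = 0) :
    ∑' p : V × V, (if G.dist p.1 p.2 = 2 then g p.1 p.2 else 0) =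
      ∑ m ∈ s, ∑ x ∈ G.neighborFinset m, ∑ y ∈ G.neighborFinset m, g x y := by
  classical
  set P : V → Finset (V × V) :=
    fun m => {p ∈ G.neighborFinset m ×ˢ G.neighborFinset m | p.1 ≠ p.2}
  have hP : ∀ m p, p ∈ P m ↔ G.Adj m p.1 ∧ G.Adj m p.2 ∧ p.1 ≠ p.2 := by
    simp [P, and_assoc]
  have hdisj : (s : Set V).PairwiseDisjoint P := fun m _ m' _ hne =>
    Finset.disjoint_left.mpr fun p hp hp' => by
      rw [hP] at hp hp'
      exact hne (hG.eq_of_adj_of_adj hp.2.2 hp.1 hp.2.1 hp'.1 hp'.2.1)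
  have hsupp : ∀ p ∉ s.biUnion P, (if G.dist p.1 p.2 = 2 then g p.1 p.2 else 0) = 0 := by
    intro p hp
    refine ite_eq_right_iff.mpr fun hd => ?_
    obtain ⟨hne, m, hm1, hm2⟩ := hG.dist_eq_two_iff.mp hd
    by_contra hg0
    have hm : m ∈ s := by
      by_cases h1 : p.1 ∈ t
      · exact hts _ h1 ((G.mem_neighborFinset ..).mpr hm1.symm)
      by_cases h2 : p.2 ∈ t
      · exact hts _ h2 ((G.mem_neighborFinset ..).mpr hm2.symm)
      exact absurd (hgt _ _ h1 h2) hg0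
    exact hp (mem_biUnion.mpr ⟨m, hm, (hP m p).mpr ⟨hm1, hm2, hne⟩⟩)
  have hon : ∀ p ∈ s.biUnion P, (if G.dist p.1 p.2 = 2 then g p.1 p.2 else 0) = g p.1 p.2 := by
    intro p hp
    obtain ⟨m, -, hpm⟩ := mem_biUnion.mp hp
    obtain ⟨hm1, hm2, hne⟩ := (hP m p).mp hpm
    rw [if_pos (hG.dist_eq_two_iff.mpr ⟨hne, m, hm1, hm2⟩)]
  rw [tsum_eq_sum hsupp, sum_congr rfl hon, sum_biUnion hdisj]
  refine sum_congr rfl fun m _ => ?_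
  simp only [P]
  rw [sum_filter_of_ne (p := fun p : V × V => p.1 ≠ p.2) fun p _ h he => h (by rw [he]; exact hg _),
    sum_product]

variable {E : Type*}

theorem IsTree.norm_sum_neighborFinset_sq_le [SeminormedAddCommGroup E] {q : ℕ}
    (hG : G.IsTree) (hreg : G.IsRegularOfDegree (q + 1)) {o m : V} (hne : o ≠ m) (v : V → E) :
    ‖∑ y ∈ G.neighborFinset m, v y‖ ^ 2 ≤
      2 * ∑ y ∈ G.parentFinset o m, ‖v y‖ ^ 2 + 2 * q * ∑ y ∈ G.childFinset o m, ‖v y‖ ^ 2 := by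
  have hparent := norm_sum_sq_le_card_mul (G.parentFinset o m) v
  have hchild := norm_sum_sq_le_card_mul (G.childFinset o m) v
  rw [hG.isAcyclic.card_parentFinset (hG.connected o m) hne, Nat.cast_one, one_mul] at hparent
  rw [hG.card_childFinset hreg hne] at hchild
  rw [hG.sum_neighborFinset_eq_add o m]
  calc _ ≤ (‖∑ y ∈ G.parentFinset o m, v y‖ + ‖∑ y ∈ G.childFinset o m, v y‖) ^ 2 :=
        pow_le_pow_left₀ (norm_nonneg _) (norm_add_le _ _) 2
    _ ≤ 2 * (‖∑ y ∈ G.parentFinset o m, v y‖ ^ 2 + ‖∑ y ∈ G.childFinset o m, v y‖ ^ 2) :=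
        add_sq_le
    _ ≤ _ := by linarith

theorem IsTree.sum_norm_sum_neighborFinset_sq_le [SeminormedAddCommGroup E] {q : ℕ}
    (hG : G.IsTree) (hreg : G.IsRegularOfDegree (q + 1)) {o : V} {s t : Finset V}
    (hos : o ∉ s) (hot : o ∉ t) (hts : ∀ y ∈ t, G.neighborFinset y ⊆ s) {v : V → E}
    (hv : ∀ x ∉ t, v x = 0) :
    ∑ m ∈ s, ‖∑ y ∈ G.neighborFinset m, v y‖ ^ 2 ≤ 4 * q * ∑ x ∈ t, ‖v x‖ ^ 2 := by
  have hF : ∀ x ∉ t, ‖v x‖ ^ 2 = 0 := fun x hx => by simp [hv x hx]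
  have hparent : ∑ m ∈ s, ∑ y ∈ G.parentFinset o m, ‖v y‖ ^ 2 = q * ∑ x ∈ t, ‖v x‖ ^ 2 := by
    rw [sum_sum_eq_sum_card_nsmul (fun _ _ => mem_parentFinset_iff_mem_childFinset)
      (fun y hy => (childFinset_subset_neighborFinset o y).trans (hts y hy)) hF, mul_sum]
    refine sum_congr rfl fun x hx => ?_
    rw [hG.card_childFinset hreg (ne_of_mem_of_not_mem hx hot).symm, nsmul_eq_mul]
  have hchild : ∑ m ∈ s, ∑ y ∈ G.childFinset o m, ‖v y‖ ^ 2 = ∑ x ∈ t, ‖v x‖ ^ 2 := by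
    rw [sum_sum_eq_sum_card_nsmul (fun _ _ => mem_parentFinset_iff_mem_childFinset.symm)
      (fun y hy => (parentFinset_subset_neighborFinset o y).trans (hts y hy)) hF]
    refine sum_congr rfl fun x hx => ?_
    rw [hG.isAcyclic.card_parentFinset (hG.connected o x) (ne_of_mem_of_not_mem hx hot).symm,
      one_smul]
  calc _ ≤ ∑ m ∈ s, (2 * ∑ y ∈ G.parentFinset o m, ‖v y‖ ^ 2 +
        2 * q * ∑ y ∈ G.childFinset o m, ‖v y‖ ^ 2) := sum_le_sum fun m hm =>
          hG.norm_sum_neighborFinset_sq_le hreg (ne_of_mem_of_not_mem hm hos).symm v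
    _ = 4 * q * ∑ x ∈ t, ‖v x‖ ^ 2 := by
      rw [sum_add_distrib, ← mul_sum, ← mul_sum, hparent, hchild]
      ring

theorem IsTree.two_mul_sub_one_sq_mul_tsum_le [NormedAddCommGroup E] [InnerProductSpace ℝ E]
    [Infinite V] {q : ℕ} (hG : G.IsTree) (hreg : G.IsRegularOfDegree (q + 1)) {v : V → E}
    (hv : (Function.support v).Finite) :
    2 * ((q : ℝ) - 1) ^ 2 * ∑' x, ‖v x‖ ^ 2 ≤
      ∑' p : V × V, (if G.dist p.1 p.2 = 2 then ‖v p.1 - v p.2‖ ^ 2 else 0) := by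
  classical
  set t := hv.toFinset
  set s := t.biUnion fun y => G.neighborFinset y
  have hts : ∀ y ∈ t, G.neighborFinset y ⊆ s := fun y hy =>
    subset_biUnion_of_mem (fun y => G.neighborFinset y) hy
  have hv0 : ∀ x ∉ t, v x = 0 := fun x hx => by simpa [t] using hx
  obtain ⟨o, ho⟩ := Infinite.exists_notMem_finset (s ∪ t)
  rw [notMem_union] at ho
  have hpairs := hG.isAcyclic.tsum_dist_eq_two_eq_sum_sum_neighborFinset hts
    (g := fun x y => ‖v x - v y‖ ^ 2) (by simp) (fun x y hx hy => by simp [hv0 x hx, hv0 y hy])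
  have hdeg : ∑ m ∈ s, ∑ x ∈ G.neighborFinset m, ‖v x‖ ^ 2 = (q + 1) * ∑ x ∈ t, ‖v x‖ ^ 2 := by
    rw [sum_sum_eq_sum_card_nsmul (fun _ _ => by simp [adj_comm]) hts
      (fun x hx => by simp [hv0 x hx]), mul_sum]
    simp [card_neighborFinset_eq_degree, hreg.degree_eq]
  have hadj := hG.sum_norm_sum_neighborFinset_sq_le hreg ho.1 ho.2 hts hv0
  rw [tsum_eq_sum (s := t) (fun x hx => by simp [hv0 x hx]), hpairs]
  simp only [sum_sum_norm_sub_sq, card_neighborFinset_eq_degree, hreg.degree_eq]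
  rw [sum_sub_distrib, ← mul_sum, ← mul_sum, hdeg]
  push_cast
  linear_combination 2 * hadj

end LocallyFinite

end SimpleGraph

namespace HomTree

variable {q : ℕ}

noncomputable instance (T : HomTree q) : T.G.LocallyFinite := fun x => (T.nbrFin x).fintype

theorem isTree_s13 (T : HomTree q) : T.G.IsTree := ⟨T.conn, T.acyclic⟩

theorem isRegularOfDegree (T : HomTree q) : T.G.IsRegularOfDegree (q + 1) := T.degree

end HomTree

open HomTree in
/-- nonnegativity of the potential energy. -/
theorem stmt13 {q : ℕ} (hq : 2 ≤ q) (T : HomTree q) (v : T.V → ℂ)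
    (hv : (Function.support v).Finite) :
    (∑' p : T.V × T.V,
        (if T.G.dist p.1 p.2 = 2 then ‖v p.1 - v p.2‖ ^ 2 else 0)) ≥
      2 * ((q : ℝ) - 1) ^ 2 * ∑' x : T.V, ‖v x‖ ^ 2 ∧
    0 ≤ (1 / (4 * (q : ℝ))) * ∑' p : T.V × T.V,
          (if T.G.dist p.1 p.2 = 2 then ‖(v p.1 - v p.2) / 2‖ ^ 2 else 0)
        - (((q : ℝ) - 1) ^ 2 / (8 * (q : ℝ))) * ∑' x : T.V, ‖v x‖ ^ 2 := by
  have : Infinite T.V := T.isTree_s13.infinite_of_isRegularOfDegree T.isRegularOfDegree (by omega)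
  have hmain := T.isTree_s13.two_mul_sub_one_sq_mul_tsum_le T.isRegularOfDegree hv
  refine ⟨hmain, ?_⟩
  have hhalf : ∀ p : T.V × T.V,
      (if T.G.dist p.1 p.2 = 2 then ‖(v p.1 - v p.2) / 2‖ ^ 2 else 0) =
        (if T.G.dist p.1 p.2 = 2 then ‖v p.1 - v p.2‖ ^ 2 else 0) / 4 := fun p => by
    split_ifs <;> norm_num [norm_div, div_pow]
  rw [tsum_congr hhalf, tsum_div_const]
  set A := ∑' p : T.V × T.V, (if T.G.dist p.1 p.2 = 2 then ‖v p.1 - v p.2‖ ^ 2 else 0)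
  set B := ∑' x : T.V, ‖v x‖ ^ 2
  have hq0 : (0 : ℝ) < q := Nat.cast_pos.mpr (by omega)
  have hrescale : 1 / (4 * (q : ℝ)) * (A / 4) - ((q : ℝ) - 1) ^ 2 / (8 * q) * B =
      (A - 2 * ((q : ℝ) - 1) ^ 2 * B) / (16 * q) := by
    field_simp
    ring
  rw [hrescale]
  exact div_nonneg (sub_nonneg.mpr hmain) (by positivity)
end
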